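/- Let m ∈ ℤ_{≥0} and Im τ > 0, and define φ₁(τ,u,v) = Σ_{j∈ℤ} (−1)^j e^{2πij(2m+1)u + πi(u+v)} q^{(m+1/2)j² + j/2} / (1 − e^{2πi(u+v)} q^j). Then φ₁(τ, u, v) + e^{2πi(m+1/2)(2v−τ)} φ₁(τ, u, v−τ) = Σ_{k=0}^{2m} e^{2πi(k+1/2)v} q^{−(k+1/2)²/(2(2m+1))} Θ⁻_{k+1/2, m+1/2}(τ, 2u), where Θ⁻_{j,m+1/2}(τ,z) = Σ_{n∈ℤ} (−1)ⁿ e^{2πi(m+1/2)z(n + j/(2m+1))} q^{(m+1/2)(n + j/(2m+1))²}. -/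

import Mathlib

/-!
Write `x_j = e^{2πi(u+v)} q^j` and `N_j` for the numerator of the `j`-th term of `φ₁(τ,u,v)`.
After the shift `j ↦ j + 1`, the `j`-th term of `φ₁(τ,u,v-τ)` has the same denominator `1 - x_j`,
and the prefactor `e^{2πi(m+1/2)(2v-τ)}` turns its numerator into `-N_j x_j^{2m+1}`. The two series
therefore add termwise to `Σ_j N_j (1 - x_j^{2m+1}) / (1 - x_j) = Σ_{k=0}^{2m} Σ_j N_j x_j^k`, and
completing the square in the exponent identifies `Σ_j N_j x_j^k` with the `k`-th theta term.
-/

noncomputable section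

open Complex

/-- The alternate theta function `Θ⁻_{j, m+1/2}(τ,z)` of degree `m + 1/2`,
with `q^x = e^{2πiτx}`. -/
def ThetaB (m : ℕ) (j τ z : ℂ) : ℂ :=
  ∑' n : ℤ,
    (-1 : ℂ) ^ n *
      Complex.exp (2 * (Real.pi : ℂ) * I * ((m : ℂ) + 1 / 2) * z *
        ((n : ℂ) + j / (2 * (m : ℂ) + 1))) *
      Complex.exp (2 * (Real.pi : ℂ) * I * τ * ((m : ℂ) + 1 / 2) *
        ((n : ℂ) + j / (2 * (m : ℂ) + 1)) ^ 2)

/-- The mock theta series `φ₁^{[B;m]}(τ,u,v)`, with `q^x = e^{2πiτx}`. -/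
def PhiB1 (m : ℕ) (τ u v : ℂ) : ℂ :=
  ∑' j : ℤ,
    (-1 : ℂ) ^ j *
      Complex.exp (2 * (Real.pi : ℂ) * I * (j : ℂ) * (2 * (m : ℂ) + 1) * u +
        (Real.pi : ℂ) * I * (u + v)) *
      Complex.exp (2 * (Real.pi : ℂ) * I * τ * (((m : ℂ) + 1 / 2) * (j : ℂ) ^ 2 + (j : ℂ) / 2)) /
      (1 - Complex.exp (2 * (Real.pi : ℂ) * I * (u + v)) *
        Complex.exp (2 * (Real.pi : ℂ) * I * τ * (j : ℂ)))

open Filter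
open scoped Real

lemma eventually_half_le_norm_one_sub_exp {a b : ℂ} (hb : b.re < 0) :
    ∀ᶠ j : ℤ in cofinite, 1 / 2 ≤ ‖1 - Complex.exp (a + b * j)‖ := by
  have hnorm (j : ℤ) : ‖Complex.exp (a + b * j)‖ = Real.exp (a.re + b.re * j) := by
    simp [Complex.norm_exp]
  have hbot : Tendsto (fun j : ℤ => a.re + b.re * j) atBot atTop :=
    tendsto_atTop_add_const_left _ _
      ((tendsto_intCast_atBot_iff.mpr tendsto_id).const_mul_atBot_of_neg hb)
  have htop : Tendsto (fun j : ℤ => a.re + b.re * j) atTop atBot :=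
    tendsto_atBot_add_const_left _ _ (tendsto_intCast_atTop_atTop.const_mul_atTop_of_neg hb)
  rw [Int.cofinite_eq, eventually_sup]
  constructor
  · filter_upwards [(Real.tendsto_exp_atTop.comp hbot).eventually_ge_atTop (3 / 2)] with j hj
    have := norm_sub_norm_le (Complex.exp (a + b * j)) 1
    rw [norm_sub_rev, hnorm, norm_one] at this
    simp only [Function.comp_apply] at hj
    linarith
  · filter_upwards [(Real.tendsto_exp_atBot.comp htop).eventually_le_const
      (by norm_num : (0 : ℝ) < 1 / 2)] with j hj
    have := norm_sub_norm_le 1 (Complex.exp (a + b * j))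
    rw [hnorm, norm_one] at this
    simp only [Function.comp_apply] at hj
    linarith

lemma summable_div_one_sub_exp {f : ℤ → ℂ} (hf : Summable f) {a b : ℂ} (hb : b.re < 0) :
    Summable fun j : ℤ => f j / (1 - Complex.exp (a + b * j)) := by
  refine Summable.of_norm_bounded_eventually ((summable_norm_iff.mpr hf).mul_left 2) ?_
  filter_upwards [eventually_half_le_norm_one_sub_exp (a := a) hb] with j hj
  rw [norm_div, div_le_iff₀ (by linarith)]
  nlinarith [norm_nonneg (f j)]

lemma neg_one_zpow_eq_exp (j : ℤ) : (-1 : ℂ) ^ j = Complex.exp (j * (π * I)) := by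
  rw [Complex.exp_int_mul, Complex.exp_pi_mul_I]

namespace ThetaB

def term (m : ℕ) (j τ z : ℂ) (n : ℤ) : ℂ :=
  (-1 : ℂ) ^ n * Complex.exp (2 * π * I * (m + 1 / 2) * z * (n + j / (2 * m + 1))) *
    Complex.exp (2 * π * I * τ * (m + 1 / 2) * (n + j / (2 * m + 1)) ^ 2)

lemma tsum_term (m : ℕ) (j τ z : ℂ) : ∑' n, term m j τ z n = ThetaB m j τ z := rfl

lemma term_eq_mul_jacobiTheta₂_term (m : ℕ) (j τ z : ℂ) (n : ℤ) :
    term m j τ z n =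
      Complex.exp (2 * π * I * (m + 1 / 2) * z * (j / (2 * m + 1)) +
          π * I * ((2 * m + 1) * τ) * (j / (2 * m + 1)) ^ 2) *
        jacobiTheta₂_term n ((m + 1 / 2) * z + (2 * m + 1) * τ * (j / (2 * m + 1)) + 1 / 2)
          ((2 * m + 1) * τ) := by
  rw [term, jacobiTheta₂_term, neg_one_zpow_eq_exp]
  simp only [← Complex.exp_add]
  congr 1
  ring

lemma summable_term (m : ℕ) (j z : ℂ) {τ : ℂ} (hτ : 0 < τ.im) :
    Summable (term m j τ z) := by
  have him : 0 < ((2 * m + 1) * τ).im := by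
    simpa using mul_pos (by positivity : (0 : ℝ) < 2 * m + 1) hτ
  rw [funext (term_eq_mul_jacobiTheta₂_term m j τ z)]
  exact ((summable_jacobiTheta₂_term_iff _ _).mpr him).mul_left _

end ThetaB

namespace PhiB1

variable (m : ℕ) (τ u v : ℂ)

def num (j : ℤ) : ℂ :=
  (-1 : ℂ) ^ j * Complex.exp (2 * π * I * j * (2 * m + 1) * u + π * I * (u + v)) *
    Complex.exp (2 * π * I * τ * ((m + 1 / 2) * j ^ 2 + j / 2))

def ratio (j : ℤ) : ℂ :=
  Complex.exp (2 * π * I * (u + v)) * Complex.exp (2 * π * I * τ * j)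

def term (j : ℤ) : ℂ := num m τ u v j / (1 - ratio τ u v j)

lemma tsum_term : ∑' j, term m τ u v j = PhiB1 m τ u v := rfl

lemma num_mul_ratio_pow (k : ℕ) (j : ℤ) :
    num m τ u v j * ratio τ u v j ^ k =
      Complex.exp (2 * π * I * (k + 1 / 2) * v) *
        Complex.exp (-(2 * π * I * τ) * (k + 1 / 2) ^ 2 / (2 * (2 * m + 1))) *
        ThetaB.term m (k + 1 / 2) τ (2 * u) j := by
  have h2m1 : (2 * m + 1 : ℂ) ≠ 0 := by exact_mod_cast (2 * m).succ_ne_zero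
  rw [num, ratio, ThetaB.term, neg_one_zpow_eq_exp, mul_pow, ← Complex.exp_nat_mul,
    ← Complex.exp_nat_mul]
  simp only [← Complex.exp_add]
  congr 1
  field_simp
  ring

lemma ratio_eq_exp (j : ℤ) :
    ratio τ u v j = Complex.exp (2 * π * I * (u + v) + 2 * π * I * τ * j) := by
  rw [ratio, Complex.exp_add]

lemma summable_num_mul_ratio_pow (hτ : 0 < τ.im) (k : ℕ) :
    Summable fun j => num m τ u v j * ratio τ u v j ^ k := by
  simp only [num_mul_ratio_pow]
  exact (ThetaB.summable_term m _ _ hτ).mul_left _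

lemma summable_term (hτ : 0 < τ.im) : Summable (term m τ u v) := by
  have hnum : Summable (num m τ u v) := by
    simpa only [pow_zero, mul_one] using summable_num_mul_ratio_pow m τ u v hτ 0
  have hb : (2 * π * I * τ).re < 0 := by
    simpa using mul_pos Real.two_pi_pos hτ
  unfold term
  simp_rw [ratio_eq_exp]
  exact summable_div_one_sub_exp hnum hb

lemma ratio_sub_add_one (j : ℤ) : ratio τ u (v - τ) (j + 1) = ratio τ u v j := by
  simp only [ratio, ← Complex.exp_add]
  congr 1
  push_cast
  ring

lemma exp_mul_num_sub_add_one (j : ℤ) :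
    Complex.exp (2 * π * I * (m + 1 / 2) * (2 * v - τ)) * num m τ u (v - τ) (j + 1) =
      -(num m τ u v j * ratio τ u v j ^ (2 * m + 1)) := by
  rw [num, num, ratio, neg_one_zpow_eq_exp, neg_one_zpow_eq_exp, mul_pow, ← Complex.exp_nat_mul,
    ← Complex.exp_nat_mul, neg_eq_neg_one_mul, ← Complex.exp_pi_mul_I]
  simp only [← Complex.exp_add]
  congr 1
  push_cast
  ring

lemma ratio_ne_one (hpole : ∀ a b : ℤ, u + v ≠ a + b * τ) (j : ℤ) :
    ratio τ u v j ≠ 1 := by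
  rw [ratio_eq_exp]
  intro h
  obtain ⟨n, hn⟩ := Complex.exp_eq_one_iff.mp h
  refine hpole n (-j) (mul_left_cancel₀ Complex.two_pi_I_ne_zero ?_)
  push_cast
  linear_combination hn

lemma term_add_exp_mul_term_sub_add_one (j : ℤ) (hx : ratio τ u v j ≠ 1) :
    term m τ u v j +
        Complex.exp (2 * π * I * (m + 1 / 2) * (2 * v - τ)) * term m τ u (v - τ) (j + 1) =
      ∑ k ∈ Finset.range (2 * m + 1), num m τ u v j * ratio τ u v j ^ k := by
  have hden : 1 - ratio τ u v j ≠ 0 := sub_ne_zero.mpr hx.symm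
  rw [term, term, ratio_sub_add_one, mul_div_assoc', exp_mul_num_sub_add_one, ← Finset.mul_sum,
    ← add_div, eq_comm, eq_div_iff hden, mul_assoc, geom_sum_mul_neg]
  ring

end PhiB1

open PhiB1 in
theorem stmt13 (m : ℕ) (τ u v : ℂ) (hτ : 0 < τ.im)
    (hpole : ∀ a b : ℤ, u + v ≠ (a : ℂ) + (b : ℂ) * τ) :
    PhiB1 m τ u v +
        Complex.exp (2 * (Real.pi : ℂ) * I * ((m : ℂ) + 1 / 2) * (2 * v - τ)) *
          PhiB1 m τ u (v - τ) =
      ∑ k ∈ Finset.range (2 * m + 1),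
        Complex.exp (2 * (Real.pi : ℂ) * I * ((k : ℂ) + 1 / 2) * v) *
          Complex.exp (-(2 * (Real.pi : ℂ) * I * τ) * ((k : ℂ) + 1 / 2) ^ 2 /
            (2 * (2 * (m : ℂ) + 1))) *
          ThetaB m ((k : ℂ) + 1 / 2) τ (2 * u) := by
  have hshift : Summable fun j : ℤ =>
      Complex.exp (2 * π * I * (m + 1 / 2) * (2 * v - τ)) * term m τ u (v - τ) (j + 1) :=
    ((summable_term m τ u (v - τ) hτ).comp_injective (add_left_injective 1)).mul_left _
  calc _ = ∑' j : ℤ, (term m τ u v j +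
        Complex.exp (2 * π * I * (m + 1 / 2) * (2 * v - τ)) * term m τ u (v - τ) (j + 1)) := by
        rw [← tsum_term, ← tsum_term,
          ← (Equiv.addRight (1 : ℤ)).tsum_eq (term m τ u (v - τ)), ← tsum_mul_left,
          (summable_term m τ u v hτ).tsum_add hshift]
        rfl
    _ = ∑' j : ℤ, ∑ k ∈ Finset.range (2 * m + 1), num m τ u v j * ratio τ u v j ^ k :=
        tsum_congr fun j =>
          term_add_exp_mul_term_sub_add_one m τ u v j (ratio_ne_one τ u v hpole j)
    _ = ∑ k ∈ Finset.range (2 * m + 1), ∑' j : ℤ, num m τ u v j * ratio τ u v j ^ k :=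
        Summable.tsum_finsetSum fun k _ => summable_num_mul_ratio_pow m τ u v hτ k
    _ = _ := by simp_rw [num_mul_ratio_pow, tsum_mul_left, ThetaB.tsum_term]
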